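/- Let x∼y be an edge of G and let 0 ≤ p1 ≤ p2 ≤ 1. Suppose there exists a single 1-Lipschitz function φ with Σ_w φ(w)·(μ_x^{p1}(w) − μ_y^{p1}(w)) = W_1(μ_x^{p1}, μ_y^{p1}) and Σ_w φ(w)·(μ_x^{p2}(w) − μ_y^{p2}(w)) = W_1(μ_x^{p2}, μ_y^{p2}). Then the function W_{xy}(p) = W_1(μ_x^p, μ_y^p) is linear on [p1, p2]: for every α ∈ [0,1], W_{xy}(α·p1 + (1−α)·p2) = α·W_{xy}(p1) + (1−α)·W_{xy}(p2). -/

import Mathlib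

open scoped Classical

noncomputable def mu {V : Type*} (G : SimpleGraph V) [G.LocallyFinite] (x : V) (p : ℝ) :
    V → ℝ :=
  fun z => if z = x then p else if G.Adj x z then (1 - p) / (G.degree x) else 0

def IsPlan {V : Type*} (π : V × V → ℝ) (μ1 μ2 : V → ℝ) : Prop :=
  (∀ q, π q ∈ Set.Icc (0 : ℝ) 1) ∧ (Function.support π).Finite ∧
    (∀ u, ∑ᶠ v, π (u, v) = μ1 u) ∧ (∀ v, ∑ᶠ u, π (u, v) = μ2 v)

noncomputable def cost {V : Type*} (G : SimpleGraph V) (π : V × V → ℝ) : ℝ :=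
  ∑ᶠ q : V × V, (G.dist q.1 q.2 : ℝ) * π q

noncomputable def W1 {V : Type*} (G : SimpleGraph V) (μ1 μ2 : V → ℝ) : ℝ :=
  sInf (cost G '' {π | IsPlan π μ1 μ2})

noncomputable def kappa {V : Type*} (G : SimpleGraph V) [G.LocallyFinite]
    (p : ℝ) (x y : V) : ℝ :=
  1 - W1 G (mu G x p) (mu G y p)

def IsLip {V : Type*} (G : SimpleGraph V) (φ : V → ℝ) : Prop :=
  ∀ u v, |φ u - φ v| ≤ (G.dist u v : ℝ)

noncomputable def Fpot {V : Type*} (G : SimpleGraph V) [G.LocallyFinite]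
    (x y : V) (φ : V → ℝ) : ℝ :=
  (G.degree y : ℝ) * ∑ z ∈ (G.neighborFinset x).erase y, φ z
    - (G.degree x : ℝ) * ∑ z ∈ (G.neighborFinset y).erase x, φ z

noncomputable def cIdle {V : Type*} (G : SimpleGraph V) [G.LocallyFinite]
    (x y : V) (j : ℤ) : ℝ :=
  sSup (Fpot G x y ''
    {φ | IsLip G φ ∧ (∀ w, ∃ n : ℤ, φ w = (n : ℝ)) ∧ φ x = (j : ℝ) ∧ φ y = 0})

noncomputable def fIdle {V : Type*} (G : SimpleGraph V) [G.LocallyFinite]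
    (x y : V) (j : ℤ) (p : ℝ) : ℝ :=
  (p - (1 - p) / (G.degree y : ℝ)) * (j : ℝ)
    + ((1 - p) / ((G.degree x : ℝ) * (G.degree y : ℝ))) * cIdle G x y j

def IsFinProb {V : Type*} (μ : V → ℝ) : Prop :=
  (∀ v, 0 ≤ μ v) ∧ (Function.support μ).Finite ∧ ∑ᶠ v, μ v = 1

/-!
The map `p ↦ W1 (μ_x^p) (μ_y^p)` is convex: a convex combination of plans for `p1` and `p2` is a
plan for the combined measures, and `μ_x^p` and the cost are affine in `p` and in the plan. On the
other hand, weak duality bounds it from below by the pairing `∑ φ (μ_x^p - μ_y^p)`, which is affine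
in `p` and, by hypothesis, meets `W1` at `p1` and `p2`. The affine minorant and the chord therefore
coincide with `W1` on `[p1, p2]`.
-/

section Transport

open Function

variable {V : Type*}

namespace IsPlan

variable {π : V × V → ℝ} {μ1 μ2 : V → ℝ}

lemma hasFiniteSupport (h : IsPlan π μ1 μ2) : HasFiniteSupport π := h.2.1

lemma hasFiniteSupport_row (h : IsPlan π μ1 μ2) (u : V) :
    HasFiniteSupport fun v => π (u, v) :=
  h.hasFiniteSupport.comp_of_injective (Prod.mk_right_injective u)

lemma hasFiniteSupport_col (h : IsPlan π μ1 μ2) (v : V) :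
    HasFiniteSupport fun u => π (u, v) :=
  h.hasFiniteSupport.comp_of_injective (Prod.mk_left_injective v)

lemma hasFiniteSupport_left (h : IsPlan π μ1 μ2) : HasFiniteSupport μ1 := by
  refine (h.hasFiniteSupport.image Prod.fst).subset fun u hu => ?_
  rw [mem_support, ← h.2.2.1 u] at hu
  obtain ⟨v, hv⟩ : ∃ v, π (u, v) ≠ 0 := by
    by_contra! h0
    exact hu (finsum_eq_zero_of_forall_eq_zero h0)
  exact ⟨(u, v), hv, rfl⟩

lemma hasFiniteSupport_right (h : IsPlan π μ1 μ2) : HasFiniteSupport μ2 := by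
  refine (h.hasFiniteSupport.image Prod.snd).subset fun v hv => ?_
  rw [mem_support, ← h.2.2.2 v] at hv
  obtain ⟨u, hu⟩ : ∃ u, π (u, v) ≠ 0 := by
    by_contra! h0
    exact hv (finsum_eq_zero_of_forall_eq_zero h0)
  exact ⟨(u, v), hu, rfl⟩

lemma convexComb {π' : V × V → ℝ} {ν1 ν2 : V → ℝ} (h : IsPlan π μ1 μ2)
    (h' : IsPlan π' ν1 ν2) {α : ℝ} (hα0 : 0 ≤ α) (hα1 : α ≤ 1) :
    IsPlan (fun q => α * π q + (1 - α) * π' q)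
      (fun u => α * μ1 u + (1 - α) * ν1 u) (fun v => α * μ2 v + (1 - α) * ν2 v) := by
  refine ⟨fun q => ?_, ?_, fun u => ?_, fun v => ?_⟩
  · obtain ⟨h0, h1⟩ := h.1 q
    obtain ⟨h0', h1'⟩ := h'.1 q
    constructor <;> nlinarith
  · exact (h.hasFiniteSupport.fun_mul_right _).add (h'.hasFiniteSupport.fun_mul_right _)
  · rw [finsum_add_distrib ((h.hasFiniteSupport_row u).fun_mul_right _)
      ((h'.hasFiniteSupport_row u).fun_mul_right _), ← mul_finsum, ← mul_finsum,
      h.2.2.1, h'.2.2.1]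
  · rw [finsum_add_distrib ((h.hasFiniteSupport_col v).fun_mul_right _)
      ((h'.hasFiniteSupport_col v).fun_mul_right _), ← mul_finsum, ← mul_finsum,
      h.2.2.2, h'.2.2.2]

end IsPlan

lemma IsFinProb.le_one {μ : V → ℝ} (h : IsFinProb μ) (v : V) : μ v ≤ 1 :=
  h.2.2 ▸ single_le_finsum v h.2.1 h.1

lemma IsFinProb.isPlan_prod {μ ν : V → ℝ} (hμ : IsFinProb μ) (hν : IsFinProb ν) :
    IsPlan (fun q => μ q.1 * ν q.2) μ ν := by
  refine ⟨fun q => ⟨mul_nonneg (hμ.1 _) (hν.1 _),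
    mul_le_one₀ (hμ.le_one _) (hν.1 _) (hν.le_one _)⟩, ?_, fun u => ?_, fun v => ?_⟩
  · exact (hμ.2.1.prod hν.2.1).subset fun q hq =>
      ⟨left_ne_zero_of_mul hq, right_ne_zero_of_mul hq⟩
  · change ∑ᶠ v, μ u * ν v = μ u
    rw [← mul_finsum, hν.2.2, mul_one]
  · change ∑ᶠ u, μ u * ν v = ν v
    rw [← finsum_mul, hμ.2.2, one_mul]

lemma finsum_mul_sub_convexComb {φ μ1 μ2 ν1 ν2 : V → ℝ} (hμ1 : HasFiniteSupport μ1)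
    (hμ2 : HasFiniteSupport μ2) (hν1 : HasFiniteSupport ν1) (hν2 : HasFiniteSupport ν2)
    (α : ℝ) :
    ∑ᶠ w, φ w * ((α * μ1 w + (1 - α) * ν1 w) - (α * μ2 w + (1 - α) * ν2 w)) =
      α * ∑ᶠ w, φ w * (μ1 w - μ2 w) + (1 - α) * ∑ᶠ w, φ w * (ν1 w - ν2 w) := by
  rw [mul_finsum, mul_finsum, ← finsum_add_distrib (by fun_prop) (by fun_prop)]
  exact finsum_congr fun w => by ring

variable (G : SimpleGraph V)

lemma cost_nonneg {π : V × V → ℝ} {μ1 μ2 : V → ℝ} (h : IsPlan π μ1 μ2) : 0 ≤ cost G π :=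
  finsum_nonneg fun q => mul_nonneg (Nat.cast_nonneg _) (h.1 q).1

lemma cost_linearComb {π π' : V × V → ℝ} (h : HasFiniteSupport π) (h' : HasFiniteSupport π')
    (α β : ℝ) :
    cost G (fun q => α * π q + β * π' q) = α * cost G π + β * cost G π' := by
  simp only [cost, mul_add, mul_left_comm _ α, mul_left_comm _ β]
  rw [finsum_add_distrib (by fun_prop) (by fun_prop), ← mul_finsum, ← mul_finsum]

lemma IsLip.finsum_mul_sub_le_cost {φ : V → ℝ} (hφ : IsLip G φ) {π : V × V → ℝ}
    {μ1 μ2 : V → ℝ} (h : IsPlan π μ1 μ2) :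
    ∑ᶠ w, φ w * (μ1 w - μ2 w) ≤ cost G π := by
  have hπ := h.hasFiniteSupport
  have hμ1 := h.hasFiniteSupport_left
  have hμ2 := h.hasFiniteSupport_right
  have hfst : ∑ᶠ w, φ w * μ1 w = ∑ᶠ q : V × V, φ q.1 * π q := by
    rw [finsum_curry _ (by fun_prop)]
    simp only [← mul_finsum, h.2.2.1]
  have hsnd : ∑ᶠ w, φ w * μ2 w = ∑ᶠ q : V × V, φ q.2 * π q := by
    rw [← finsum_comp_equiv (Equiv.prodComm V V)]
    simp only [Equiv.prodComm_apply, Prod.snd_swap]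
    rw [finsum_curry (fun q => φ q.1 * π q.swap)
      ((hπ.comp_of_injective Prod.swap_injective).fun_mul_right _)]
    simp only [Prod.swap_prod_mk, ← mul_finsum, h.2.2.2]
  calc ∑ᶠ w, φ w * (μ1 w - μ2 w)
      = ∑ᶠ q : V × V, (φ q.1 - φ q.2) * π q := by
        simp only [mul_sub, sub_mul]
        rw [finsum_sub_distrib (by fun_prop) (by fun_prop), hfst, hsnd,
          finsum_sub_distrib (by fun_prop) (by fun_prop)]
    _ ≤ cost G π :=
        finsum_le_finsum' (by fun_prop) (by fun_prop) fun q =>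
          mul_le_mul_of_nonneg_right ((le_abs_self _).trans (hφ q.1 q.2)) (h.1 q).1

lemma W1_le_cost {π : V × V → ℝ} {μ1 μ2 : V → ℝ} (h : IsPlan π μ1 μ2) :
    W1 G μ1 μ2 ≤ cost G π :=
  csInf_le ⟨0, by rintro _ ⟨π, hπ, rfl⟩; exact cost_nonneg G hπ⟩ ⟨π, h, rfl⟩

lemma IsLip.finsum_mul_sub_le_W1 {φ : V → ℝ} (hφ : IsLip G φ) {π : V × V → ℝ}
    {μ1 μ2 : V → ℝ} (h : IsPlan π μ1 μ2) :
    ∑ᶠ w, φ w * (μ1 w - μ2 w) ≤ W1 G μ1 μ2 :=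
  le_csInf ⟨_, π, h, rfl⟩ fun _ ⟨_, hπ, hc⟩ => hc ▸ hφ.finsum_mul_sub_le_cost G hπ

lemma exists_cost_lt_W1_add {π : V × V → ℝ} {μ1 μ2 : V → ℝ} (h : IsPlan π μ1 μ2) {ε : ℝ}
    (hε : 0 < ε) : ∃ σ, IsPlan σ μ1 μ2 ∧ cost G σ < W1 G μ1 μ2 + ε := by
  obtain ⟨_, ⟨σ, hσ, rfl⟩, hσε⟩ := Real.lt_sInf_add_pos (⟨_, π, h, rfl⟩ :
    (cost G '' {π | IsPlan π μ1 μ2}).Nonempty) hε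
  exact ⟨σ, hσ, hσε⟩

lemma W1_convexComb_le {π π' : V × V → ℝ} {μ1 μ2 ν1 ν2 : V → ℝ} (h : IsPlan π μ1 μ2)
    (h' : IsPlan π' ν1 ν2) {α : ℝ} (hα0 : 0 ≤ α) (hα1 : α ≤ 1) :
    W1 G (fun u => α * μ1 u + (1 - α) * ν1 u) (fun v => α * μ2 v + (1 - α) * ν2 v) ≤
      α * W1 G μ1 μ2 + (1 - α) * W1 G ν1 ν2 := by
  refine le_of_forall_pos_le_add fun ε hε => ?_
  obtain ⟨σ, hσ, hσε⟩ := exists_cost_lt_W1_add G h hε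
  obtain ⟨σ', hσ', hσ'ε⟩ := exists_cost_lt_W1_add G h' hε
  have hmix := W1_le_cost G (hσ.convexComb hσ' hα0 hα1)
  rw [cost_linearComb G hσ.hasFiniteSupport hσ'.hasFiniteSupport] at hmix
  nlinarith

variable [G.LocallyFinite]

lemma mu_convexComb (x : V) (p1 p2 α : ℝ) :
    mu G x (α * p1 + (1 - α) * p2) = fun z => α * mu G x p1 z + (1 - α) * mu G x p2 z := by
  funext z
  unfold mu
  split_ifs <;> ring

lemma support_mu_subset (x : V) (p : ℝ) :
    support (mu G x p) ⊆ ↑(insert x (G.neighborFinset x)) := by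
  intro z hz
  contrapose! hz
  simp_all [mu]

lemma hasFiniteSupport_mu (x : V) (p : ℝ) : HasFiniteSupport (mu G x p) :=
  (Finset.finite_toSet _).subset (support_mu_subset G x p)

lemma finsum_mu {x : V} (hx : 0 < G.degree x) (p : ℝ) : ∑ᶠ z, mu G x p z = 1 := by
  have hnbr (z : V) (hz : z ∈ G.neighborFinset x) : mu G x p z = (1 - p) / G.degree x := by
    have hxz : G.Adj x z := (G.mem_neighborFinset x z).1 hz
    simp [mu, hxz, hxz.ne']
  have hx' : (G.degree x : ℝ) ≠ 0 := by positivity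
  rw [finsum_eq_sum_of_support_subset _ (support_mu_subset G x p),
    Finset.sum_insert (by simp), Finset.sum_congr rfl hnbr, Finset.sum_const,
    SimpleGraph.card_neighborFinset_eq_degree, nsmul_eq_mul]
  simp only [mu, if_true]
  field_simp
  ring

lemma isFinProb_mu {x : V} (hx : 0 < G.degree x) {p : ℝ} (hp0 : 0 ≤ p) (hp1 : p ≤ 1) :
    IsFinProb (mu G x p) := by
  refine ⟨fun z => ?_, hasFiniteSupport_mu G x p, finsum_mu G hx p⟩
  unfold mu
  split_ifs
  · exact hp0
  · exact div_nonneg (by linarith) (Nat.cast_nonneg _)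
  · exact le_rfl

end Transport

theorem stmt10_general {V : Type*} (G : SimpleGraph V) [G.LocallyFinite]
    (x y : V) (hxy : G.Adj x y) (p1 p2 : ℝ)
    (hp1 : 0 ≤ p1) (hp12 : p1 ≤ p2) (hp2 : p2 ≤ 1)
    (φ : V → ℝ) (hφ : IsLip G φ)
    (hopt1 : ∑ᶠ w, φ w * (mu G x p1 w - mu G y p1 w) = W1 G (mu G x p1) (mu G y p1))
    (hopt2 : ∑ᶠ w, φ w * (mu G x p2 w - mu G y p2 w) = W1 G (mu G x p2) (mu G y p2)) :
    ∀ α ∈ Set.Icc (0 : ℝ) 1,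
      W1 G (mu G x (α * p1 + (1 - α) * p2)) (mu G y (α * p1 + (1 - α) * p2)) =
        α * W1 G (mu G x p1) (mu G y p1) + (1 - α) * W1 G (mu G x p2) (mu G y p2) := by
  rintro α ⟨hα0, hα1⟩
  have hx := (G.degree_pos_iff_exists_adj x).2 ⟨y, hxy⟩
  have hy := (G.degree_pos_iff_exists_adj y).2 ⟨x, hxy.symm⟩
  have hplan {p : ℝ} (hp0 : 0 ≤ p) (hp1 : p ≤ 1) :=
    (isFinProb_mu G hx hp0 hp1).isPlan_prod (isFinProb_mu G hy hp0 hp1)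
  have h1 := hplan hp1 (hp12.trans hp2)
  have h2 := hplan (hp1.trans hp12) hp2
  rw [mu_convexComb G x, mu_convexComb G y]
  refine le_antisymm (W1_convexComb_le G h1 h2 hα0 hα1) ?_
  calc α * W1 G (mu G x p1) (mu G y p1) + (1 - α) * W1 G (mu G x p2) (mu G y p2)
      = α * ∑ᶠ w, φ w * (mu G x p1 w - mu G y p1 w)
          + (1 - α) * ∑ᶠ w, φ w * (mu G x p2 w - mu G y p2 w) := by rw [hopt1, hopt2]
    _ = _ := (finsum_mul_sub_convexComb (hasFiniteSupport_mu G x p1) (hasFiniteSupport_mu G y p1)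
          (hasFiniteSupport_mu G x p2) (hasFiniteSupport_mu G y p2) α).symm
    _ ≤ _ := hφ.finsum_mul_sub_le_W1 G (h1.convexComb h2 hα0 hα1)

theorem stmt10 {V : Type*} (G : SimpleGraph V) [G.LocallyFinite] (hG : G.Connected)
    (x y : V) (hxy : G.Adj x y) (p1 p2 : ℝ)
    (hp1 : 0 ≤ p1) (hp12 : p1 ≤ p2) (hp2 : p2 ≤ 1)
    (φ : V → ℝ) (hφ : IsLip G φ)
    (hopt1 : ∑ᶠ w, φ w * (mu G x p1 w - mu G y p1 w) = W1 G (mu G x p1) (mu G y p1))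
    (hopt2 : ∑ᶠ w, φ w * (mu G x p2 w - mu G y p2 w) = W1 G (mu G x p2) (mu G y p2)) :
    ∀ α ∈ Set.Icc (0 : ℝ) 1,
      W1 G (mu G x (α * p1 + (1 - α) * p2)) (mu G y (α * p1 + (1 - α) * p2)) =
        α * W1 G (mu G x p1) (mu G y p1) + (1 - α) * W1 G (mu G x p2) (mu G y p2) :=
  stmt10_general G x y hxy p1 p2 hp1 hp12 hp2 φ hφ hopt1 hopt2
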